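/- Let G ∈ ℝ^{n×n} be symmetric positive semidefinite, s ≤ n, and let λ₁ ≥ λ₂ ≥ … ≥ λₙ ≥ 0 be the eigenvalues of G ordered decreasingly. Then the infimum over H ∈ ℝ^{n×s} of the dual KPCA objective (1/2) Tr(Hᵀ H) − Tr √(Hᵀ G H) equals −(1/2) Σ_{i=1}^s λᵢ, and it is attained at H^svd, the matrix whose j-th column is √(λⱼ) uⱼ where u₁,…,uₛ are orthonormal eigenvectors of G associated to the s largest eigenvalues λ₁,…,λₛ. -/

import Mathlib

open scoped Matrix

namespace Matrix.PosSemidef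

open scoped ComplexOrder

/-- The positive semidefinite square root of a positive semidefinite matrix
(the definition removed from Mathlib, restored with its old meaning) -/
noncomputable def sqrt {n 𝕜 : Type*} [Fintype n] [RCLike 𝕜] [DecidableEq n]
    {A : Matrix n n 𝕜} (hA : A.PosSemidef) : Matrix n n 𝕜 :=
  hA.1.eigenvectorUnitary.1 * diagonal ((↑) ∘ (√·) ∘ hA.1.eigenvalues) *
    (star hA.1.eigenvectorUnitary : Matrix n n 𝕜)

end Matrix.PosSemidef

lemma transposeMulMul_posSemidef {n s : ℕ} {G : Matrix (Fin n) (Fin n) ℝ}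
    (hG : G.PosSemidef) (H : Matrix (Fin n) (Fin s) ℝ) : (Hᵀ * G * H).PosSemidef := by
  simpa [Matrix.conjTranspose_eq_transpose_of_trivial] using hG.conjTranspose_mul_mul_same H

/-!
Write `A = √G`. For every `H` there is a contraction `Q` (i.e. `QᵀQ ≤ 1`) with
`Tr √(HᵀGH) = Tr(Qᵀ A H)`: take `Q = A H N` with `N` the pseudo-inverse of `√(HᵀGH)`.
Then `‖H - A Q‖² ≥ 0` gives `2 Tr √(HᵀGH) ≤ Tr(HᵀH) + Tr(QᵀGQ)`, and since `Q` is a contraction,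
`Tr(QᵀGQ) = Σᵢ λᵢ wᵢ` with weights `wᵢ = ‖Qᵀuᵢ‖² ∈ [0, 1]` of total mass at most `s`, so it is at
most `λ₁ + ⋯ + λₛ` (Ky Fan). At `H^svd` both `HᵀH` and `√(HᵀGH)` equal `diag(λ₁, …, λₛ)`.
-/

open Finset

open scoped MatrixOrder

namespace Matrix.PosSemidef

open scoped ComplexOrder

theorem sqrt_eq_cfcSqrt {n 𝕜 : Type*} [Fintype n] [RCLike 𝕜] [DecidableEq n]
    {A : Matrix n n 𝕜} (hA : A.PosSemidef) : hA.sqrt = CFC.sqrt A := by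
  rw [CFC.sqrt_eq_cfc, cfc_nnreal_eq_real _ A hA.nonneg, hA.1.cfc_eq]
  simp [Matrix.IsHermitian.cfc, Matrix.PosSemidef.sqrt, Function.comp_def,
    max_eq_left (hA.eigenvalues_nonneg _)]

end Matrix.PosSemidef

theorem sum_mul_le_sum_castLE {n s : ℕ} (hs : s ≤ n) {lam w : Fin n → ℝ} (hlam : Antitone lam)
    (hlam₀ : ∀ i, 0 ≤ lam i) (hw₀ : ∀ i, 0 ≤ w i) (hw₁ : ∀ i, w i ≤ 1) (hw : ∑ i, w i ≤ s) :
    ∑ i, lam i * w i ≤ ∑ j : Fin s, lam (Fin.castLE hs j) := by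
  set top := univ.map (Fin.castLEEmb hs)
  have mem_top (i : Fin n) : i ∈ top ↔ (i : ℕ) < s := by
    simp only [top, mem_map, mem_univ, true_and, Fin.castLEEmb_apply]
    exact ⟨fun ⟨j, hj⟩ => hj ▸ j.isLt, fun h => ⟨⟨i, h⟩, rfl⟩⟩
  set e : Fin n → ℝ := fun i => if i ∈ top then 1 else 0
  -- thresholding at `c = lam s`: the factors `lam i - c` and `w i - e i` have opposite signs
  obtain ⟨c, hc₀, hc⟩ : ∃ c, 0 ≤ c ∧ ∀ i, (lam i - c) * (w i - e i) ≤ 0 := by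
    refine ⟨if h : s < n then lam ⟨s, h⟩ else 0, by split_ifs <;> simp [hlam₀], fun i => ?_⟩
    by_cases hi : (i : ℕ) < s
    · refine mul_nonpos_of_nonneg_of_nonpos (sub_nonneg.2 ?_) ?_
      · split_ifs with h
        · exact hlam (Fin.le_def.2 hi.le)
        · exact hlam₀ i
      · simp [e, (mem_top i).2 hi, hw₁ i]
    · refine mul_nonpos_of_nonpos_of_nonneg (sub_nonpos.2 ?_) ?_
      · rw [dif_pos (by omega)]; exact hlam (Fin.le_def.2 (by simpa using hi))
      · simp [e, (mem_top i).not.2 hi, hw₀ i]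
  have he : ∑ i, e i = s := by
    simp only [e, sum_boole, filter_mem_eq_inter, univ_inter, top, card_map, card_univ,
      Fintype.card_fin]
  have hlam_e : ∑ i, lam i * e i = ∑ j : Fin s, lam (Fin.castLE hs j) := by
    simp only [e, mul_ite, mul_one, mul_zero, sum_ite_mem, univ_inter, top, sum_map]
    rfl
  have hsplit : ∑ i, lam i * w i
      = ∑ i, lam i * e i + ∑ i, (lam i - c) * (w i - e i) + c * (∑ i, w i - ∑ i, e i) := by
    simp only [mul_sub, sub_mul, sum_sub_distrib, mul_sum]; ring
  have hcross : ∑ i, (lam i - c) * (w i - e i) ≤ 0 := sum_nonpos fun i _ => hc i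
  have hslack : c * (∑ i, w i - ∑ i, e i) ≤ 0 := mul_nonpos_of_nonneg_of_nonpos hc₀ (by linarith)
  linarith

namespace Matrix

section

variable {m s : Type*} [Fintype m] [Fintype s]

theorem two_mul_trace_transpose_mul_le (Y Z : Matrix m s ℝ) :
    2 * (Yᵀ * Z).trace ≤ (Yᵀ * Y).trace + (Zᵀ * Z).trace := by
  simp only [trace, Matrix.diag, mul_apply, transpose_apply, mul_sum, ← sum_add_distrib]
  gcongr with j _ i _
  nlinarith [sq_nonneg (Y i j - Z i j)]

theorem diag_le_one_of_mul_self_le {P : Matrix m m ℝ} (hP : P.IsSymm) (h : P * P ≤ P)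
    (i : m) : P i i ≤ 1 := by
  have hPP : (P * P) i i ≤ P i i := by
    simpa using (le_iff.mp h).diag_nonneg (i := i)
  have hsq : P i i ^ 2 ≤ (P * P) i i := by
    rw [mul_apply]
    simp_rw [← hP.apply i, ← sq]
    exact single_le_sum (fun j _ => sq_nonneg (P j i)) (mem_univ i)
  nlinarith

variable [DecidableEq s]

theorem exists_trace_transpose_mul_eq_trace_sqrt (X : Matrix m s ℝ) :
    ∃ Q : Matrix m s ℝ, Qᵀ * Q ≤ 1 ∧ (Qᵀ * X).trace = (CFC.sqrt (Xᵀ * X)).trace := by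
  have hM : 0 ≤ Xᵀ * X := by
    rw [nonneg_iff_posSemidef, ← conjTranspose_eq_transpose_of_trivial]
    exact posSemidef_conjTranspose_mul_self X
  have hcont (f : ℝ → ℝ) : ContinuousOn f (spectrum ℝ (Xᵀ * X)) :=
    finite_real_spectrum.continuousOn f
  -- `N` is the Moore–Penrose inverse of `√(XᵀX)`, thanks to the junk value `(√0)⁻¹ = 0`
  set N := cfc (fun x : ℝ => (√x)⁻¹) (Xᵀ * X)
  have hN : Nᵀ = N := (isHermitian_iff_isSymm.mp (cfc_predicate _ _)).eq
  have hNM : N * (Xᵀ * X) = cfc Real.sqrt (Xᵀ * X) := by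
    conv_lhs => rw [← cfc_id' ℝ (Xᵀ * X) hM.isSelfAdjoint]
    rw [← cfc_mul _ _ _ (hcont _) (hcont _)]
    simp only [inv_mul_eq_div, Real.div_sqrt]
  refine ⟨X * N, ?_, ?_⟩
  · rw [transpose_mul, hN, Matrix.mul_assoc, ← Matrix.mul_assoc Xᵀ, ← Matrix.mul_assoc, hNM,
      ← cfc_mul _ _ _ (hcont _) (hcont _)]
    exact cfc_le_one _ _ fun x _ => mul_inv_le_one
  · rw [transpose_mul, hN, Matrix.mul_assoc, hNM, CFC.sqrt_eq_real_sqrt _ hM, cfcₙ_eq_cfc]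

end

section

variable {ι m : Type*} [Fintype m] [DecidableEq ι] {v : ι → m → ℝ}

theorem of_mul_transpose_eq_one
    (horth : ∀ i k, v i ⬝ᵥ v k = if i = k then (1 : ℝ) else 0) : of v * (of v)ᵀ = 1 := by
  ext i k
  simpa [mul_apply, one_apply, dotProduct] using horth i k

theorem mul_transpose_of_eigenvectors [Fintype ι] {G : Matrix m m ℝ} {μ : ι → ℝ}
    (heig : ∀ i, G *ᵥ v i = μ i • v i) : G * (of v)ᵀ = (of v)ᵀ * diagonal μ := by
  ext x i
  rw [mul_diagonal]
  simpa [mul_apply, mulVec, dotProduct, mul_comm] using congrFun (heig i) x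

end

theorem trace_transpose_mul_diagonal_mul_le {n s : ℕ} (hs : s ≤ n) {lam : Fin n → ℝ}
    (hlam : Antitone lam) (hlam₀ : ∀ i, 0 ≤ lam i) {R : Matrix (Fin n) (Fin s) ℝ}
    (hR : Rᵀ * R ≤ 1) :
    (Rᵀ * diagonal lam * R).trace ≤ ∑ j : Fin s, lam (Fin.castLE hs j) := by
  set P := R * Rᵀ
  have hP : P.PosSemidef := by
    simpa [P, conjTranspose_eq_transpose_of_trivial] using posSemidef_self_mul_conjTranspose R
  have hPP : P * P ≤ P := by
    have := (le_iff.mp hR).mul_mul_conjTranspose_same R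
    rw [le_iff]
    simpa [P, conjTranspose_eq_transpose_of_trivial, Matrix.mul_sub, Matrix.sub_mul,
      Matrix.mul_assoc] using this
  have htrace : ∑ i, P i i ≤ s := by
    have := (le_iff.mp hR).trace_nonneg
    rw [trace_sub, trace_one, Fintype.card_fin, sub_nonneg, trace_mul_comm] at this
    exact this
  have hdiag : (Rᵀ * diagonal lam * R).trace = ∑ i, lam i * P i i := by
    rw [trace_mul_cycle]
    simp [trace, P, mul_diagonal, mul_comm]
  rw [hdiag]
  exact sum_mul_le_sum_castLE hs hlam hlam₀ (fun i => hP.diag_nonneg)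
    (diag_le_one_of_mul_self_le (isHermitian_iff_isSymm.mp hP.1) hPP) htrace

theorem trace_transpose_mul_mul_le_of_eigenvectors {n s : ℕ} (hs : s ≤ n)
    {lam : Fin n → ℝ} (hlam : Antitone lam) (hlam₀ : ∀ i, 0 ≤ lam i)
    {G : Matrix (Fin n) (Fin n) ℝ} {u : Fin n → Fin n → ℝ}
    (horth : ∀ i k, u i ⬝ᵥ u k = if i = k then (1 : ℝ) else 0)
    (heig : ∀ i, G *ᵥ u i = lam i • u i) {Q : Matrix (Fin n) (Fin s) ℝ} (hQ : Qᵀ * Q ≤ 1) :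
    (Qᵀ * G * Q).trace ≤ ∑ j : Fin s, lam (Fin.castLE hs j) := by
  set U := of u
  have hUU : Uᵀ * U = 1 := mul_eq_one_comm.mp (of_mul_transpose_eq_one horth)
  have hG : G = Uᵀ * diagonal lam * U := by
    rw [← mul_transpose_of_eigenvectors heig, Matrix.mul_assoc, hUU, Matrix.mul_one]
  have hR : (U * Q)ᵀ * (U * Q) = Qᵀ * Q := by
    rw [transpose_mul, Matrix.mul_assoc, ← Matrix.mul_assoc Uᵀ, hUU, Matrix.one_mul]
  have hQGQ : Qᵀ * G * Q = (U * Q)ᵀ * diagonal lam * (U * Q) := by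
    simp only [hG, transpose_mul, Matrix.mul_assoc]
  rw [hQGQ]
  exact trace_transpose_mul_diagonal_mul_le hs hlam hlam₀ (hR ▸ hQ)

end Matrix

open Matrix

noncomputable def kpcaDualObjective {m s : Type*} [Fintype m] [Fintype s] [DecidableEq s]
    (G : Matrix m m ℝ) (H : Matrix m s ℝ) : ℝ :=
  (1 / 2) * (Hᵀ * H).trace - (CFC.sqrt (Hᵀ * G * H)).trace

theorem kpcaDualObjective_of_eigenvectors {ι m : Type*} [Fintype ι] [DecidableEq ι] [Fintype m]
    {G : Matrix m m ℝ} {v : ι → m → ℝ} {μ : ι → ℝ}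
    (horth : ∀ i k, v i ⬝ᵥ v k = if i = k then (1 : ℝ) else 0)
    (heig : ∀ i, G *ᵥ v i = μ i • v i) (hμ : ∀ i, 0 ≤ μ i) :
    kpcaDualObjective G ((of v)ᵀ * diagonal fun j => √(μ j)) = -(1 / 2) * ∑ j, μ j := by
  set D := diagonal fun j => √(μ j)
  have hvv := of_mul_transpose_eq_one horth
  have hDD : D * D = diagonal μ := by
    simp [D, diagonal_mul_diagonal, Real.mul_self_sqrt (hμ _)]
  have hD : Dᵀ = D := diagonal_transpose _
  have hHH : ((of v)ᵀ * D)ᵀ * ((of v)ᵀ * D) = diagonal μ := by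
    rw [transpose_mul, hD, transpose_transpose, Matrix.mul_assoc, ← Matrix.mul_assoc (of v), hvv,
      Matrix.one_mul, hDD]
  have hHGH : ((of v)ᵀ * D)ᵀ * G * ((of v)ᵀ * D) = diagonal μ * diagonal μ := by
    simp only [transpose_mul, hD, transpose_transpose, Matrix.mul_assoc]
    rw [← Matrix.mul_assoc G, mul_transpose_of_eigenvectors heig, ← hDD,
      ← Matrix.mul_assoc (of v), ← Matrix.mul_assoc (of v), hvv, Matrix.one_mul]
    simp only [Matrix.mul_assoc]
  have hμ' : 0 ≤ diagonal μ := nonneg_iff_posSemidef.mpr (PosSemidef.diagonal fun i => hμ i)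
  rw [kpcaDualObjective, hHH, hHGH, CFC.sqrt_mul_self _ hμ', trace_diagonal]
  ring

theorem le_kpcaDualObjective {n s : ℕ} (hs : s ≤ n) {G : Matrix (Fin n) (Fin n) ℝ}
    (hG : G.PosSemidef) {u : Fin n → Fin n → ℝ} {lam : Fin n → ℝ}
    (horth : ∀ i k, u i ⬝ᵥ u k = if i = k then (1 : ℝ) else 0)
    (heig : ∀ i, G *ᵥ u i = lam i • u i) (hlam : Antitone lam) (hlam₀ : ∀ i, 0 ≤ lam i)
    (H : Matrix (Fin n) (Fin s) ℝ) :
    -(1 / 2) * ∑ j : Fin s, lam (Fin.castLE hs j) ≤ kpcaDualObjective G H := by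
  set A := CFC.sqrt G
  have hA : Aᵀ = A := (isHermitian_iff_isSymm.mp (CFC.sqrt_nonneg G).isSelfAdjoint).eq
  have hAA : A * A = G := CFC.sqrt_mul_sqrt_self G hG.nonneg
  obtain ⟨Q, hQ, htrace⟩ := exists_trace_transpose_mul_eq_trace_sqrt (A * H)
  have hAH : (A * H)ᵀ * (A * H) = Hᵀ * G * H := by
    rw [transpose_mul, hA, Matrix.mul_assoc, ← Matrix.mul_assoc A, hAA, Matrix.mul_assoc]
  have hAQ : (A * Q)ᵀ * (A * Q) = Qᵀ * G * Q := by
    rw [transpose_mul, hA, Matrix.mul_assoc, ← Matrix.mul_assoc A, hAA, Matrix.mul_assoc]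
  have hcross : (Qᵀ * (A * H)).trace = ((A * Q)ᵀ * H).trace := by
    rw [transpose_mul, hA, Matrix.mul_assoc]
  have hsquare := two_mul_trace_transpose_mul_le (A * Q) H
  have hKyFan := trace_transpose_mul_mul_le_of_eigenvectors hs hlam hlam₀ horth heig hQ
  rw [kpcaDualObjective, ← hAH, ← htrace, hcross]
  rw [hAQ] at hsquare
  linarith

/-- The infimum of the dual KPCA objective `(1/2)Tr(HᵀH) - Tr√(HᵀGH)` over `H ∈ ℝ^{n×s}`
is `-(1/2) Σ_{i=1}^s λᵢ` (the `s` largest eigenvalues of `G`), attained at `H^svd`,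
whose `j`-th column is `√λⱼ uⱼ`. -/
theorem dual_kpca_infimum {n s : ℕ} (hs : s ≤ n)
    {G : Matrix (Fin n) (Fin n) ℝ} (hG : G.PosSemidef)
    (u : Fin n → (Fin n → ℝ)) (lam : Fin n → ℝ)
    (horth : ∀ i k : Fin n, u i ⬝ᵥ u k = if i = k then (1 : ℝ) else 0)
    (heig : ∀ i : Fin n, G *ᵥ u i = lam i • u i)
    (hdec : Antitone lam) (hnn : ∀ i : Fin n, 0 ≤ lam i)
    (Hsvd : Matrix (Fin n) (Fin s) ℝ)
    (hHsvd : Hsvd = Matrix.of fun i j =>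
      Real.sqrt (lam (Fin.castLE hs j)) * u (Fin.castLE hs j) i) :
    (⨅ H : Matrix (Fin n) (Fin s) ℝ,
        ((1 / 2) * (Hᵀ * H).trace - (transposeMulMul_posSemidef hG H).sqrt.trace))
      = -(1 / 2) * ∑ j : Fin s, lam (Fin.castLE hs j) ∧
    (1 / 2) * (Hsvdᵀ * Hsvd).trace - (transposeMulMul_posSemidef hG Hsvd).sqrt.trace
      = -(1 / 2) * ∑ j : Fin s, lam (Fin.castLE hs j) := by
  have hobjective (H : Matrix (Fin n) (Fin s) ℝ) :
      (1 / 2) * (Hᵀ * H).trace - (transposeMulMul_posSemidef hG H).sqrt.trace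
        = kpcaDualObjective G H := by
    rw [PosSemidef.sqrt_eq_cfcSqrt]
    rfl
  have hHsvd_eq : Hsvd = (of fun j => u (Fin.castLE hs j))ᵀ
      * diagonal fun j => √(lam (Fin.castLE hs j)) := by
    ext i j
    simp [hHsvd, mul_comm]
  have hattained : kpcaDualObjective G Hsvd = -(1 / 2) * ∑ j : Fin s, lam (Fin.castLE hs j) := by
    rw [hHsvd_eq]
    exact kpcaDualObjective_of_eigenvectors
      (fun j k => by simpa using horth (Fin.castLE hs j) (Fin.castLE hs k))
      (fun j => heig _) (fun j => hnn _)
  have hlower := le_kpcaDualObjective hs hG horth heig hdec hnn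
  simp only [hobjective]
  exact ⟨le_antisymm ((ciInf_le ⟨_, Set.forall_mem_range.2 hlower⟩ Hsvd).trans hattained.le)
    (le_ciInf hlower), hattained⟩
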